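/- arXiv:2101.06070 — 4 statements merged into one kernel-verified Lean document; each statement's English description precedes it below -/
import Mathlib

section
/- Let (βₜ) ⊂ (0,1] with β₁ = 1 and define θⱼ⁽ᵗ⁾ = βⱼ·∏_{i=j+1}^{t}(1 − βᵢ) for j < t and θₜ⁽ᵗ⁾ = βₜ. Given sequences (zₜ) in ℝ^p and (ḡₜ) in ℝ^n, define θ_{t+1} = Σ_{j=1}^{t} θⱼ⁽ᵗ⁾ z_{j+1} and y_{t+1} = Σ_{j=1}^{t} θⱼ⁽ᵗ⁾ ḡⱼ. Suppose g : ℝ^p → ℝ^n is L_g-smooth (its Jacobian is L_g-Lipschitz). Then ‖y_{t+1} − g(θ_{t+1})‖ ≤ (L_g/2)·Σ_{j=1}^{t} θⱼ⁽ᵗ⁾‖z_{j+1} − θ_{t+1}‖² + ‖Σ_{j=1}^{t} θⱼ⁽ᵗ⁾[ḡⱼ − g(z_{j+1})]‖. -/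
/-!
Since the weights `θⱼ⁽ᵗ⁾` are nonnegative and sum to one, `θ_{t+1}` is their barycenter, so the
first-order terms `∇g(θ_{t+1})(z_{j+1} − θ_{t+1})` average out to zero. Hence
`Σⱼ θⱼ⁽ᵗ⁾ g(z_{j+1}) − g(θ_{t+1})` is a weighted average of Taylor remainders, each at most
`(L_g/2)‖z_{j+1} − θ_{t+1}‖²`, and the theorem follows from the triangle inequality after writing
`y_{t+1} − g(θ_{t+1}) = (Σⱼ θⱼ⁽ᵗ⁾ g(z_{j+1}) − g(θ_{t+1})) + Σⱼ θⱼ⁽ᵗ⁾ (ḡⱼ − g(z_{j+1}))`.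
-/

/-- The convex-combination coefficients `θⱼ⁽ᵗ⁾ = βⱼ ∏_{i=j+1}^t (1 - βᵢ)`. -/
def smoothingCoef (β : ℕ → ℝ) (j t : ℕ) : ℝ :=
  β j * ∏ i ∈ Finset.Icc (j + 1) t, (1 - β i)

open Finset

section LipschitzFDeriv

variable {E F : Type*} [NormedAddCommGroup E] [NormedSpace ℝ E]
  [NormedAddCommGroup F] [NormedSpace ℝ F]

/-- Along the segment, the derivative of `s ↦ g (x + s • (y - x)) - g x - s • g' x (y - x)` has norm
at most `L ‖y - x‖² s`, the derivative of `s ↦ (L/2) ‖y - x‖² s²`; both vanish at `0`. -/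
theorem norm_sub_sub_fderiv_le_of_lipschitz_fderiv {g : E → F} {L : ℝ}
    (hg : Differentiable ℝ g) (hL : ∀ x₁ x₂, ‖fderiv ℝ g x₁ - fderiv ℝ g x₂‖ ≤ L * ‖x₁ - x₂‖)
    (x y : E) :
    ‖g y - g x - fderiv ℝ g x (y - x)‖ ≤ L / 2 * ‖y - x‖ ^ 2 := by
  set d := y - x
  set c := fderiv ℝ g x d
  have hf : ∀ s : ℝ, HasDerivAt (fun s : ℝ => g (x + s • d) - g x - s • c)
      (fderiv ℝ g (x + s • d) d - c) s := by
    intro s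
    have hline : HasDerivAt (fun s : ℝ => x + s • d) d s := by
      simpa using ((hasDerivAt_id s).smul_const d).const_add x
    have hc : HasDerivAt (fun s : ℝ => s • c) c s := by
      simpa using (hasDerivAt_id s).smul_const c
    exact (((hg _).hasFDerivAt.comp_hasDerivAt s hline).sub_const (g x)).sub hc
  have hB : ∀ s : ℝ, HasDerivAt (fun s => L / 2 * ‖d‖ ^ 2 * s ^ 2) (L * ‖d‖ ^ 2 * s) s :=
    fun s => ((hasDerivAt_pow 2 s).const_mul (L / 2 * ‖d‖ ^ 2)).congr_deriv (by norm_num; ring)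
  have bound : ∀ s ∈ Set.Ico (0 : ℝ) 1, ‖fderiv ℝ g (x + s • d) d - c‖ ≤ L * ‖d‖ ^ 2 * s := by
    intro s hs
    calc ‖fderiv ℝ g (x + s • d) d - c‖
        = ‖(fderiv ℝ g (x + s • d) - fderiv ℝ g x) d‖ := rfl
      _ ≤ ‖fderiv ℝ g (x + s • d) - fderiv ℝ g x‖ * ‖d‖ := ContinuousLinearMap.le_opNorm _ _
      _ ≤ L * ‖(x + s • d) - x‖ * ‖d‖ := by gcongr; exact hL _ _
      _ = L * ‖d‖ ^ 2 * s := by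
        rw [add_sub_cancel_left, norm_smul, Real.norm_of_nonneg hs.1]; ring
  have h := image_norm_le_of_norm_deriv_right_le_deriv_boundary
    (fun s _ => (hf s).continuousAt.continuousWithinAt) (fun s _ => (hf s).hasDerivWithinAt)
    (by simp) hB bound (Set.right_mem_Icc.mpr zero_le_one)
  simpa [d] using h

variable {ι : Type*} {s : Finset ι} {w : ι → ℝ}

theorem sum_smul_sub_barycenter_eq_zero (hw : ∑ i ∈ s, w i = 1) (x : ι → E) :
    ∑ i ∈ s, w i • (x i - ∑ j ∈ s, w j • x j) = 0 := by
  simp only [smul_sub, sum_sub_distrib, ← sum_smul, hw, one_smul, sub_self]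

theorem norm_sum_smul_apply_sub_apply_barycenter_le {g : E → F} {L : ℝ}
    (hg : Differentiable ℝ g) (hL : ∀ x₁ x₂, ‖fderiv ℝ g x₁ - fderiv ℝ g x₂‖ ≤ L * ‖x₁ - x₂‖)
    (hw₀ : ∀ i ∈ s, 0 ≤ w i) (hw : ∑ i ∈ s, w i = 1) (x : ι → E) :
    ‖∑ i ∈ s, w i • g (x i) - g (∑ i ∈ s, w i • x i)‖
      ≤ L / 2 * ∑ i ∈ s, w i * ‖x i - ∑ j ∈ s, w j • x j‖ ^ 2 := by
  have hlin : ∑ i ∈ s, w i • fderiv ℝ g (∑ j ∈ s, w j • x j) (x i - ∑ j ∈ s, w j • x j) = 0 := by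
    simp only [← map_smul, ← map_sum]
    rw [sum_smul_sub_barycenter_eq_zero hw, map_zero]
  set xb := ∑ i ∈ s, w i • x i
  have hgap : ∑ i ∈ s, w i • g (x i) - g xb
      = ∑ i ∈ s, w i • (g (x i) - g xb - fderiv ℝ g xb (x i - xb)) := by
    simp only [smul_sub, sum_sub_distrib, hlin, ← sum_smul, hw, one_smul, sub_zero]
  calc ‖∑ i ∈ s, w i • g (x i) - g xb‖
      ≤ ∑ i ∈ s, ‖w i • (g (x i) - g xb - fderiv ℝ g xb (x i - xb))‖ := hgap ▸ norm_sum_le _ _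
    _ = ∑ i ∈ s, w i * ‖g (x i) - g xb - fderiv ℝ g xb (x i - xb)‖ :=
      sum_congr rfl fun i hi => by rw [norm_smul, Real.norm_of_nonneg (hw₀ i hi)]
    _ ≤ ∑ i ∈ s, w i * (L / 2 * ‖x i - xb‖ ^ 2) :=
      sum_le_sum fun i hi => mul_le_mul_of_nonneg_left
        (norm_sub_sub_fderiv_le_of_lipschitz_fderiv hg hL xb (x i)) (hw₀ i hi)
    _ = L / 2 * ∑ i ∈ s, w i * ‖x i - xb‖ ^ 2 := by
      rw [mul_sum]; exact sum_congr rfl fun i _ => by ring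

theorem norm_sum_smul_sub_apply_barycenter_le {g : E → F} {L : ℝ}
    (hg : Differentiable ℝ g) (hL : ∀ x₁ x₂, ‖fderiv ℝ g x₁ - fderiv ℝ g x₂‖ ≤ L * ‖x₁ - x₂‖)
    (hw₀ : ∀ i ∈ s, 0 ≤ w i) (hw : ∑ i ∈ s, w i = 1) (x : ι → E) (y : ι → F) :
    ‖∑ i ∈ s, w i • y i - g (∑ i ∈ s, w i • x i)‖
      ≤ L / 2 * ∑ i ∈ s, w i * ‖x i - ∑ j ∈ s, w j • x j‖ ^ 2
        + ‖∑ i ∈ s, w i • (y i - g (x i))‖ := by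
  have hsplit : ∑ i ∈ s, w i • y i - g (∑ i ∈ s, w i • x i)
      = (∑ i ∈ s, w i • g (x i) - g (∑ i ∈ s, w i • x i)) + ∑ i ∈ s, w i • (y i - g (x i)) := by
    simp only [smul_sub, sum_sub_distrib]; abel
  rw [hsplit]
  exact (norm_add_le _ _).trans
    (add_le_add_left (norm_sum_smul_apply_sub_apply_barycenter_le hg hL hw₀ hw x) _)

end LipschitzFDeriv

section SmoothingCoef

variable {β : ℕ → ℝ}

theorem smoothingCoef_nonneg (hβ : ∀ i, β i ∈ Set.Icc (0 : ℝ) 1) (j t : ℕ) :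
    0 ≤ smoothingCoef β j t :=
  mul_nonneg (hβ j).1 (prod_nonneg fun i _ => sub_nonneg.mpr (hβ i).2)

theorem smoothingCoef_self (t : ℕ) : smoothingCoef β t t = β t := by
  simp [smoothingCoef]

theorem smoothingCoef_succ_right {j t : ℕ} (hj : j ≤ t) :
    smoothingCoef β j (t + 1) = smoothingCoef β j t * (1 - β (t + 1)) := by
  rw [smoothingCoef, smoothingCoef, prod_Icc_succ_top (by omega), mul_assoc]

theorem sum_smoothingCoef (hβ1 : β 1 = 1) {t : ℕ} (ht : 1 ≤ t) :
    ∑ j ∈ Icc 1 t, smoothingCoef β j t = 1 := by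
  induction t, ht using Nat.le_induction with
  | base => simp [smoothingCoef_self, hβ1]
  | succ t ht ih =>
    rw [sum_Icc_succ_top (by omega),
      sum_congr rfl fun j hj => smoothingCoef_succ_right (mem_Icc.mp hj).2,
      ← sum_mul, ih, smoothingCoef_self]
    ring

end SmoothingCoef

/-- with `θ_{t+1} = Σⱼ θⱼ⁽ᵗ⁾ z_{j+1}` and `y_{t+1} = Σⱼ θⱼ⁽ᵗ⁾ ḡⱼ`, and `g`
`L_g`-smooth, one has
`‖y_{t+1} − g(θ_{t+1})‖ ≤ (L_g/2) Σⱼ θⱼ⁽ᵗ⁾‖z_{j+1} − θ_{t+1}‖² + ‖Σⱼ θⱼ⁽ᵗ⁾(ḡⱼ − g(z_{j+1}))‖`. -/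
theorem smoothing_tracking_error_bound {p n : ℕ}
    (β : ℕ → ℝ) (hβ : ∀ t, β t ∈ Set.Ioc (0 : ℝ) 1) (hβ1 : β 1 = 1)
    (g : EuclideanSpace ℝ (Fin p) → EuclideanSpace ℝ (Fin n)) (Lg : ℝ)
    (hg : Differentiable ℝ g)
    (hgSmooth : ∀ x₁ x₂, ‖fderiv ℝ g x₁ - fderiv ℝ g x₂‖ ≤ Lg * ‖x₁ - x₂‖)
    (z : ℕ → EuclideanSpace ℝ (Fin p)) (gbar : ℕ → EuclideanSpace ℝ (Fin n))
    (t : ℕ) (ht : 1 ≤ t) :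
    ‖(∑ j ∈ Finset.Icc 1 t, smoothingCoef β j t • gbar j) -
        g (∑ j ∈ Finset.Icc 1 t, smoothingCoef β j t • z (j + 1))‖
      ≤ Lg / 2 *
          ∑ j ∈ Finset.Icc 1 t, smoothingCoef β j t *
            ‖z (j + 1) - ∑ j' ∈ Finset.Icc 1 t, smoothingCoef β j' t • z (j' + 1)‖ ^ 2
        + ‖∑ j ∈ Finset.Icc 1 t, smoothingCoef β j t • (gbar j - g (z (j + 1)))‖ :=
  norm_sum_smul_sub_apply_barycenter_le hg hgSmooth
    (fun j _ => smoothingCoef_nonneg (fun i => Set.Ioc_subset_Icc_self (hβ i)) j t)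
    (sum_smoothingCoef hβ1 ht) (fun j => z (j + 1)) gbar
end

section
/- Let g : ℝ^p → ℝ^n satisfy ‖g(z) − g(x) − ∇g(x)(z−x)‖ ≤ (L_g/2)‖z−x‖² for all x, z. If y is a convex combination y = Σⱼ λⱼ ḡⱼ with λⱼ ≥ 0, Σⱼ λⱼ = 1, and θ̄ = Σⱼ λⱼ zⱼ, then ‖y − g(θ̄)‖² ≤ (L_g²/2)·(Σⱼ λⱼ‖zⱼ − θ̄‖²)² + 2‖Σⱼ λⱼ(ḡⱼ − g(zⱼ))‖². -/
/-- if `g` satisfies the first-order Taylor remainder bound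
`‖g(z) − g(x) − ∇g(x)(z − x)‖ ≤ (L_g/2)‖z − x‖²`, `y = Σⱼ λⱼ ḡⱼ` is a convex combination
and `θ̄ = Σⱼ λⱼ zⱼ`, then
`‖y − g(θ̄)‖² ≤ (L_g²/2)(Σⱼ λⱼ‖zⱼ − θ̄‖²)² + 2‖Σⱼ λⱼ(ḡⱼ − g(zⱼ))‖²`. -/
theorem convex_combination_taylor_error_bound {p n t : ℕ}
    (g : EuclideanSpace ℝ (Fin p) → EuclideanSpace ℝ (Fin n)) (Lg : ℝ)
    (hg : Differentiable ℝ g)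
    (hTaylor : ∀ x z, ‖g z - g x - fderiv ℝ g x (z - x)‖ ≤ Lg / 2 * ‖z - x‖ ^ 2)
    (lam : Fin t → ℝ) (hlam : ∀ j, 0 ≤ lam j) (hsum : ∑ j, lam j = 1)
    (zv : Fin t → EuclideanSpace ℝ (Fin p)) (gbar : Fin t → EuclideanSpace ℝ (Fin n)) :
    ‖(∑ j, lam j • gbar j) - g (∑ j, lam j • zv j)‖ ^ 2
      ≤ Lg ^ 2 / 2 * (∑ j, lam j * ‖zv j - ∑ j', lam j' • zv j'‖ ^ 2) ^ 2
        + 2 * ‖∑ j, lam j • (gbar j - g (zv j))‖ ^ 2 := by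
  set θ : EuclideanSpace ℝ (Fin p) := ∑ j', lam j' • zv j' with hθ
  set D := fderiv ℝ g θ with hD
  -- the centered points sum to zero
  have hzero : ∑ j, lam j • (zv j - θ) = 0 := by
    simp only [smul_sub, Finset.sum_sub_distrib, ← Finset.sum_smul, hsum, one_smul]
    simp [hθ]
  have hD0 : ∑ j, lam j • (D (zv j - θ)) = 0 := by
    have : ∑ j, lam j • (D (zv j - θ)) = D (∑ j, lam j • (zv j - θ)) := by
      rw [map_sum]
      simp [map_smul]
    rw [this, hzero, map_zero]
  -- decomposition
  have hsplit : (∑ j, lam j • gbar j) - g θ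
      = (∑ j, lam j • (gbar j - g (zv j)))
        + ∑ j, lam j • (g (zv j) - g θ - D (zv j - θ)) := by
    have h1 : ∑ j, lam j • (g θ) = g θ := by
      rw [← Finset.sum_smul, hsum, one_smul]
    simp only [smul_sub, Finset.sum_sub_distrib, hD0, h1]
    abel
  -- bound the Taylor term
  set S : ℝ := ∑ j, lam j * ‖zv j - θ‖ ^ 2 with hS
  have hA : ‖∑ j, lam j • (g (zv j) - g θ - D (zv j - θ))‖ ≤ Lg / 2 * S := by
    have hle : ∀ j ∈ Finset.univ,
        ‖lam j • (g (zv j) - g θ - D (zv j - θ))‖ ≤ Lg / 2 * (lam j * ‖zv j - θ‖ ^ 2) := by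
      intro j _
      rw [norm_smul, Real.norm_eq_abs, abs_of_nonneg (hlam j)]
      have := hTaylor θ (zv j)
      nlinarith [hlam j, norm_nonneg (g (zv j) - g θ - D (zv j - θ))]
    calc ‖∑ j, lam j • (g (zv j) - g θ - D (zv j - θ))‖
        ≤ ∑ j, Lg / 2 * (lam j * ‖zv j - θ‖ ^ 2) := norm_sum_le_of_le _ hle
      _ = Lg / 2 * S := by rw [hS, Finset.mul_sum]
  have hAnn : (0:ℝ) ≤ ‖∑ j, lam j • (g (zv j) - g θ - D (zv j - θ))‖ := norm_nonneg _
  have hA2 : ‖∑ j, lam j • (g (zv j) - g θ - D (zv j - θ))‖ ^ 2 ≤ (Lg / 2 * S) ^ 2 := by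
    nlinarith
  have htri : ‖(∑ j, lam j • gbar j) - g θ‖
      ≤ ‖∑ j, lam j • (gbar j - g (zv j))‖
        + ‖∑ j, lam j • (g (zv j) - g θ - D (zv j - θ))‖ := by
    rw [hsplit]; exact norm_add_le _ _
  have hy : (0:ℝ) ≤ ‖(∑ j, lam j • gbar j) - g θ‖ := norm_nonneg _
  have hB : (0:ℝ) ≤ ‖∑ j, lam j • (gbar j - g (zv j))‖ := norm_nonneg _
  nlinarith [sq_nonneg (‖∑ j, lam j • (gbar j - g (zv j))‖
    - ‖∑ j, lam j • (g (zv j) - g θ - D (zv j - θ))‖)]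
end

section
/- Suppose the nonnegative real sequences (𝒟ₜ), (ℱₜ²) satisfy 𝒟₁ = 0, ℱ₁ = 0, ℱₜ² ≤ (1 − β_{t−1})ℱ_{t−1}² + (4K/ξ²)·α_{t−1}²/β_{t−1} and 𝒟_{t+1} ≤ (1 − βₜ)𝒟ₜ + (2K/ξ²)·αₜ²/βₜ + βₜℱₜ², where αₜ = C_α/t^a, βₜ = C_β/t^b with 0 < b ≤ 1, (2a − 2b) ∉ (−1, 0), C_β > 1 + 2a − 2b, and constants K, ξ > 0. Then there exist constants C_ℱ, C_𝒟 > 0 such that ℱₜ² ≤ C_ℱ/t^{2a−2b} and 𝒟ₜ ≤ C_𝒟/t^{2a−2b} for all t. -/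
private lemma div_rpow_eq' (C y e : ℝ) (hy : 0 ≤ y) : C / y ^ e = C * y ^ (-e) := by
  rw [Real.rpow_neg hy, div_eq_mul_inv]

private lemma bern_ineq' (x e : ℝ) (hx : 1 ≤ x) (he : 0 ≤ e) :
    (1 - e / x) * x ^ (-e) ≤ (x + 1) ^ (-e) := by
  have hx0 : (0:ℝ) < x := by linarith
  have hxe : (0:ℝ) < x ^ (-e) := Real.rpow_pos_of_pos hx0 _
  have h1 : (0:ℝ) < 1 + 1/x := by positivity
  have hmain : 1 - e / x ≤ (1 + 1/x) ^ (-e) := by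
    rw [Real.rpow_def_of_pos h1]
    have hlog : Real.log (1 + 1/x) ≤ 1/x := by
      have := Real.log_le_sub_one_of_pos h1
      linarith
    have h2 : Real.log (1 + 1/x) * -e ≥ -(e/x) := by
      have := mul_le_mul_of_nonneg_left hlog he
      have hex : e * (1/x) = e/x := by ring
      nlinarith
    calc 1 - e/x ≤ Real.exp (-(e/x)) := by
          have := Real.add_one_le_exp (-(e/x)); linarith
      _ ≤ Real.exp (Real.log (1 + 1/x) * -e) := Real.exp_le_exp.mpr h2
  have hsplit : (x+1) ^ (-e) = x ^ (-e) * (1 + 1/x) ^ (-e) := by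
    rw [← Real.mul_rpow hx0.le h1.le]
    congr 1
    field_simp
  rw [hsplit]
  nlinarith [mul_le_mul_of_nonneg_right hmain hxe.le]

private lemma master_rec' (A : ℕ → ℝ) (Cβ b e c : ℝ)
    (hA : ∀ t, 0 ≤ A t) (hA1 : A 1 = 0)
    (hCβp : 0 < Cβ) (hb : 0 < b) (hb1 : b ≤ 1)
    (he : e ≤ -1 ∨ 0 ≤ e) (heCβ : e < Cβ) (hc : 0 ≤ c)
    (hrec : ∀ s : ℕ, 1 ≤ s →
      A (s+1) ≤ (1 - Cβ / (s:ℝ) ^ b) * A s + c * (s:ℝ) ^ (-b-e)) :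
    ∃ C, 0 < C ∧ ∀ t : ℕ, 1 ≤ t → A t ≤ C / (t:ℝ) ^ e := by
  have h2e : (0:ℝ) < (2:ℝ) ^ e := Real.rpow_pos_of_pos (by norm_num) _
  have hCβe : 0 < Cβ - e := by linarith
  set C : ℝ := c * 2^e + c/(Cβ - e) + c/Cβ + c + 1 with hCdef
  have hC1 : 0 ≤ c * 2^e := by positivity
  have hC2 : 0 ≤ c/(Cβ - e) := div_nonneg hc hCβe.le
  have hC3 : 0 ≤ c/Cβ := div_nonneg hc hCβp.le
  have hC0 : 0 < C := by rw [hCdef]; linarith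
  have hb1' : c * 2^e ≤ C := by rw [hCdef]; linarith
  have hb2 : c ≤ (Cβ - e) * C := by
    have h : c/(Cβ - e) ≤ C := by rw [hCdef]; linarith
    calc c = (Cβ - e) * (c/(Cβ-e)) := by field_simp
      _ ≤ (Cβ - e) * C := mul_le_mul_of_nonneg_left h hCβe.le
  have hb3 : c ≤ Cβ * C := by
    have h : c/Cβ ≤ C := by rw [hCdef]; linarith
    calc c = Cβ * (c/Cβ) := by field_simp
      _ ≤ Cβ * C := mul_le_mul_of_nonneg_left h hCβp.le
  have hb4 : c ≤ C := by rw [hCdef]; linarith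
  refine ⟨C, hC0, ?_⟩
  intro t ht
  induction t, ht using Nat.le_induction with
  | base => simp only [Nat.cast_one, Real.one_rpow, div_one, hA1]; exact hC0.le
  | succ s hs ih =>
    have hx1 : (1:ℝ) ≤ (s:ℝ) := by exact_mod_cast hs
    have hx0 : (0:ℝ) < (s:ℝ) := by linarith
    have hxb : (0:ℝ) < (s:ℝ) ^ b := Real.rpow_pos_of_pos hx0 _
    have hxe : (0:ℝ) < (s:ℝ) ^ (-e) := Real.rpow_pos_of_pos hx0 _
    have hxnb : (0:ℝ) < (s:ℝ) ^ (-b) := Real.rpow_pos_of_pos hx0 _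
    have hx1e : (0:ℝ) < ((s:ℝ)+1) ^ (-e) := Real.rpow_pos_of_pos (by linarith) _
    have hbeta : Cβ / (s:ℝ)^b = Cβ * (s:ℝ)^(-b) := by
      rw [Real.rpow_neg hx0.le, div_eq_mul_inv]
    have hsplit : (s:ℝ) ^ (-b-e) = (s:ℝ)^(-b) * (s:ℝ)^(-e) := by
      rw [← Real.rpow_add hx0, sub_eq_add_neg]
    have hrecs := hrec s hs
    have hgoal_eq : C / ((s+1:ℕ):ℝ)^e = C * ((s:ℝ)+1)^(-e) := by
      push_cast
      rw [div_rpow_eq' _ _ _ (by linarith)]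
    rw [hgoal_eq]
    have ih' : A s ≤ C * (s:ℝ)^(-e) := by
      rw [← div_rpow_eq' _ _ _ hx0.le]; exact ih
    rcases le_or_gt (1 - Cβ/(s:ℝ)^b) 0 with hneg | hpos
    · have h1 : A (s+1) ≤ c * ((s:ℝ)^(-b) * (s:ℝ)^(-e)) := by
        have hnn := mul_nonpos_of_nonpos_of_nonneg hneg (hA s)
        rw [hsplit] at hrecs
        linarith
      have h2 : (s:ℝ)^(-b) * (s:ℝ)^(-e) ≤ (s:ℝ)^(-e) :=
        mul_le_of_le_one_left hxe.le
          (Real.rpow_le_one_of_one_le_of_nonpos hx1 (by linarith))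
      rcases he with heL | heR
      · have h3 : (s:ℝ)^(-e) ≤ ((s:ℝ)+1)^(-e) :=
          Real.rpow_le_rpow hx0.le (by linarith) (by linarith)
        calc A (s+1) ≤ c * ((s:ℝ)^(-b) * (s:ℝ)^(-e)) := h1
          _ ≤ c * (s:ℝ)^(-e) := mul_le_mul_of_nonneg_left h2 hc
          _ ≤ c * ((s:ℝ)+1)^(-e) := mul_le_mul_of_nonneg_left h3 hc
          _ ≤ C * ((s:ℝ)+1)^(-e) := mul_le_mul_of_nonneg_right hb4 hx1e.le
      · have hq : ((s:ℝ)+1)^e ≤ 2^e * (s:ℝ)^e := by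
          have h21 : ((s:ℝ)+1) ^ e ≤ (2*(s:ℝ)) ^ e :=
            Real.rpow_le_rpow (by linarith) (by linarith) heR
          rwa [Real.mul_rpow (by norm_num) hx0.le] at h21
        have hinv : ((s:ℝ)+1)^e * ((s:ℝ)+1)^(-e) = 1 := by
          rw [← Real.rpow_add (by linarith)]; simp
        have hxee : (s:ℝ)^e * (s:ℝ)^(-e) = 1 := by
          rw [← Real.rpow_add hx0]; simp
        have h3 : (s:ℝ)^(-e) ≤ 2^e * ((s:ℝ)+1)^(-e) := by
          have e1 : ((s:ℝ)+1)^e * (((s:ℝ)+1)^(-e) * (s:ℝ)^(-e)) = (s:ℝ)^(-e) := by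
            rw [← mul_assoc, hinv, one_mul]
          have e2 : 2^e * (s:ℝ)^e * (((s:ℝ)+1)^(-e) * (s:ℝ)^(-e))
              = 2^e * ((s:ℝ)+1)^(-e) := by
            calc 2^e * (s:ℝ)^e * (((s:ℝ)+1)^(-e) * (s:ℝ)^(-e))
                = 2^e * ((s:ℝ)+1)^(-e) * ((s:ℝ)^e * (s:ℝ)^(-e)) := by ring
              _ = 2^e * ((s:ℝ)+1)^(-e) := by rw [hxee, mul_one]
          have h := mul_le_mul_of_nonneg_right hq (mul_nonneg hx1e.le hxe.le)
          rw [e1, e2] at h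
          exact h
        calc A (s+1) ≤ c * ((s:ℝ)^(-b) * (s:ℝ)^(-e)) := h1
          _ ≤ c * (s:ℝ)^(-e) := mul_le_mul_of_nonneg_left h2 hc
          _ ≤ c * (2^e * ((s:ℝ)+1)^(-e)) := mul_le_mul_of_nonneg_left h3 hc
          _ = (c * 2^e) * ((s:ℝ)+1)^(-e) := by ring
          _ ≤ C * ((s:ℝ)+1)^(-e) := mul_le_mul_of_nonneg_right hb1' hx1e.le
    · have hstep : A (s+1) ≤ (1 - Cβ*(s:ℝ)^(-b)) * (C * (s:ℝ)^(-e))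
          + c * ((s:ℝ)^(-b) * (s:ℝ)^(-e)) := by
        have hm := mul_le_mul_of_nonneg_left ih' hpos.le
        rw [hsplit] at hrecs
        rw [hbeta] at hm hrecs
        linarith
      rcases he with heL | heR
      · have h4 : A (s+1) ≤ C * (s:ℝ)^(-e) := by
          have hint := mul_le_mul_of_nonneg_right hb3 (mul_pos hxnb hxe).le
          linarith [hstep, hint]
        have h5 : (s:ℝ)^(-e) ≤ ((s:ℝ)+1)^(-e) :=
          Real.rpow_le_rpow hx0.le (by linarith) (by linarith)
        calc A (s+1) ≤ C * (s:ℝ)^(-e) := h4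
          _ ≤ C * ((s:ℝ)+1)^(-e) := mul_le_mul_of_nonneg_left h5 hC0.le
      · have h6 : e * (s:ℝ)⁻¹ ≤ e * (s:ℝ)^(-b) := by
          have h61 : (s:ℝ) ^ (-1 : ℝ) ≤ (s:ℝ) ^ (-b) :=
            Real.rpow_le_rpow_of_exponent_le hx1 (by linarith)
          rw [Real.rpow_neg_one] at h61
          exact mul_le_mul_of_nonneg_left h61 heR
        have h7 : A (s+1) ≤ (1 - e * (s:ℝ)^(-b)) * (C * (s:ℝ)^(-e)) := by
          have hint := mul_le_mul_of_nonneg_right hb2 (mul_pos hxnb hxe).le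
          linarith [hstep, hint]
        have h8 : (1 - e * (s:ℝ)^(-b)) * (C * (s:ℝ)^(-e))
            ≤ (1 - e/(s:ℝ)) * (C * (s:ℝ)^(-e)) := by
          have h81 : 1 - e * (s:ℝ)^(-b) ≤ 1 - e/(s:ℝ) := by
            rw [div_eq_mul_inv]; linarith
          exact mul_le_mul_of_nonneg_right h81 (mul_pos hC0 hxe).le
        have h9 := bern_ineq' (s:ℝ) e hx1 heR
        have h10 : (1 - e/(s:ℝ)) * (C * (s:ℝ)^(-e)) ≤ C * ((s:ℝ)+1)^(-e) := by
          have := mul_le_mul_of_nonneg_left h9 hC0.le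
          linarith [this]
        exact h7.trans (h8.trans h10)

private lemma forcing_eq' (Cα Cβ a b x : ℝ) (hx : 0 < x) (hCβ : Cβ ≠ 0) :
    (Cα / x^a)^2 / (Cβ / x^b) = (Cα^2/Cβ) * x^(-b-(2*a-2*b)) := by
  have hxa : (0:ℝ) < x ^ a := Real.rpow_pos_of_pos hx a
  have hxb : (0:ℝ) < x ^ b := Real.rpow_pos_of_pos hx b
  have h1 : x^b / (x^a*x^a) = x ^ (-b-(2*a-2*b)) := by
    rw [← Real.rpow_add hx a a, ← Real.rpow_sub hx]
    congr 1; ring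
  rw [← h1, div_pow]
  rw [div_mul_div_comm]
  rw [div_eq_div_iff (by positivity) (by positivity)]
  field_simp

private lemma zero_rates' (D F2 : ℕ → ℝ) (Cβ b : ℝ)
    (hD : ∀ t, 0 ≤ D t) (hF2 : ∀ t, 0 ≤ F2 t)
    (hD1 : D 1 = 0) (hF1 : F2 1 = 0)
    (hF : ∀ s : ℕ, 1 ≤ s → F2 (s+1) ≤ (1 - Cβ/(s:ℝ)^b) * F2 s)
    (hDr : ∀ s : ℕ, 1 ≤ s →
      D (s+1) ≤ (1 - Cβ/(s:ℝ)^b) * D s + (Cβ/(s:ℝ)^b) * F2 s) :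
    ∀ t : ℕ, 1 ≤ t → F2 t = 0 ∧ D t = 0 := by
  intro t ht
  induction t, ht using Nat.le_induction with
  | base => exact ⟨hF1, hD1⟩
  | succ s hs ih =>
    have h1 := hF s hs
    have h2 := hDr s hs
    rw [ih.1, mul_zero] at h1
    rw [ih.1, ih.2, mul_zero, mul_zero, add_zero] at h2
    exact ⟨le_antisymm h1 (hF2 _), le_antisymm h2 (hD _)⟩

/-- the coupled recurrences for `𝒟ₜ` and `ℱₜ²` driven by step sizes
`αₜ = C_α/tᵃ`, `βₜ = C_β/tᵇ` yield the rates `ℱₜ² ≤ C_ℱ/t^{2a−2b}` and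
`𝒟ₜ ≤ C_𝒟/t^{2a−2b}`. -/
theorem extrapolation_smoothing_rates (D F2 : ℕ → ℝ) (K ξ Cα Cβ a b : ℝ)
    (hD : ∀ t, 0 ≤ D t) (hF2 : ∀ t, 0 ≤ F2 t)
    (hD1 : D 1 = 0) (hF1 : F2 1 = 0)
    (hK : 0 < K) (hξ : 0 < ξ)
    (hb : 0 < b) (hb1 : b ≤ 1)
    (hab : (2 * a - 2 * b) ∉ Set.Ioo (-1 : ℝ) 0) (hCβ : Cβ > 1 + 2 * a - 2 * b)
    (hFrec : ∀ t : ℕ, 2 ≤ t →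
      F2 t ≤ (1 - Cβ / ((t - 1 : ℕ) : ℝ) ^ b) * F2 (t - 1)
        + (4 * K / ξ ^ 2) * ((Cα / ((t - 1 : ℕ) : ℝ) ^ a) ^ 2 / (Cβ / ((t - 1 : ℕ) : ℝ) ^ b)))
    (hDrec : ∀ t : ℕ, 1 ≤ t →
      D (t + 1) ≤ (1 - Cβ / (t : ℝ) ^ b) * D t
        + (2 * K / ξ ^ 2) * ((Cα / (t : ℝ) ^ a) ^ 2 / (Cβ / (t : ℝ) ^ b))
        + (Cβ / (t : ℝ) ^ b) * F2 t) :
    ∃ CF > 0, ∃ CD > 0, ∀ t : ℕ, 1 ≤ t →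
      F2 t ≤ CF / (t : ℝ) ^ (2 * a - 2 * b) ∧ D t ≤ CD / (t : ℝ) ^ (2 * a - 2 * b) := by
  have hFrec' : ∀ s : ℕ, 1 ≤ s →
      F2 (s + 1) ≤ (1 - Cβ / (s : ℝ) ^ b) * F2 s
        + (4 * K / ξ ^ 2) * ((Cα / (s : ℝ) ^ a) ^ 2 / (Cβ / (s : ℝ) ^ b)) := by
    intro s hs
    have h := hFrec (s + 1) (by omega)
    simpa only [Nat.add_sub_cancel] using h
  rcases lt_trichotomy Cβ 0 with hCβneg | hCβ0 | hCβpos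
  · rcases eq_or_ne Cα 0 with hCα | hCα
    · -- Cβ < 0, Cα = 0: everything is zero
      subst hCα
      have hz := zero_rates' D F2 Cβ b hD hF2 hD1 hF1
        (fun s hs => by simpa using hFrec' s hs)
        (fun s hs => by simpa using hDrec s hs)
      refine ⟨1, one_pos, 1, one_pos, fun t ht => ?_⟩
      have hz' := hz t ht
      have ht0 : (0:ℝ) < (t:ℝ) := by exact_mod_cast Nat.lt_of_lt_of_le Nat.zero_lt_one ht
      have hpos : (0:ℝ) < (t:ℝ) ^ (2*a-2*b) := Real.rpow_pos_of_pos ht0 _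
      constructor
      · rw [hz'.1]; positivity
      · rw [hz'.2]; positivity
    · -- Cβ < 0, Cα ≠ 0: contradiction
      exfalso
      have h2 := hFrec' 1 le_rfl
      simp only [Nat.cast_one, Real.one_rpow, div_one, hF1, mul_zero, zero_add] at h2
      have hneg : (4 * K / ξ ^ 2) * (Cα ^ 2 / Cβ) < 0 := by
        apply mul_neg_of_pos_of_neg (by positivity)
        exact div_neg_of_pos_of_neg (by positivity) hCβneg
      have := hF2 2
      nlinarith [h2]
  · -- Cβ = 0
    subst hCβ0
    have hz := zero_rates' D F2 0 b hD hF2 hD1 hF1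
      (fun s hs => by simpa using hFrec' s hs)
      (fun s hs => by simpa using hDrec s hs)
    refine ⟨1, one_pos, 1, one_pos, fun t ht => ?_⟩
    have hz' := hz t ht
    have ht0 : (0:ℝ) < (t:ℝ) := by exact_mod_cast Nat.lt_of_lt_of_le Nat.zero_lt_one ht
    have hpos : (0:ℝ) < (t:ℝ) ^ (2*a-2*b) := Real.rpow_pos_of_pos ht0 _
    constructor
    · rw [hz'.1]; positivity
    · rw [hz'.2]; positivity
  · -- main case: Cβ > 0
    have he : (2*a-2*b) ≤ -1 ∨ 0 ≤ (2*a-2*b) := by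
      by_contra h
      push_neg at h
      exact hab (Set.mem_Ioo.mpr ⟨h.1, h.2⟩)
    have heCβ : (2*a-2*b) < Cβ := by linarith
    set c1 : ℝ := 4*K/ξ^2 * (Cα^2/Cβ) with hc1def
    have hc1 : 0 ≤ c1 := by rw [hc1def]; positivity
    have hrecF : ∀ s : ℕ, 1 ≤ s →
        F2 (s+1) ≤ (1 - Cβ/(s:ℝ)^b) * F2 s + c1 * (s:ℝ)^(-b-(2*a-2*b)) := by
      intro s hs
      have h := hFrec' s hs
      have hx0 : (0:ℝ) < (s:ℝ) := by exact_mod_cast Nat.lt_of_lt_of_le Nat.zero_lt_one hs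
      rw [forcing_eq' Cα Cβ a b _ hx0 hCβpos.ne'] at h
      rw [hc1def]
      linarith [h]
    obtain ⟨CF, hCF0, hCFb⟩ := master_rec' F2 Cβ b (2*a-2*b) c1 hF2 hF1 hCβpos hb hb1
      he heCβ hc1 hrecF
    set c2 : ℝ := 2*K/ξ^2 * (Cα^2/Cβ) + Cβ * CF with hc2def
    have hc2 : 0 ≤ c2 := by
      have h1 : (0:ℝ) ≤ 2*K/ξ^2 * (Cα^2/Cβ) := by positivity
      have h2 : (0:ℝ) ≤ Cβ * CF := (mul_pos hCβpos hCF0).le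
      rw [hc2def]; linarith
    have hrecD : ∀ s : ℕ, 1 ≤ s →
        D (s+1) ≤ (1 - Cβ/(s:ℝ)^b) * D s + c2 * (s:ℝ)^(-b-(2*a-2*b)) := by
      intro s hs
      have h := hDrec s hs
      have hx0 : (0:ℝ) < (s:ℝ) := by exact_mod_cast Nat.lt_of_lt_of_le Nat.zero_lt_one hs
      have hxb : (0:ℝ) < (s:ℝ)^b := Real.rpow_pos_of_pos hx0 _
      have hxe : (0:ℝ) < (s:ℝ)^(2*a-2*b) := Real.rpow_pos_of_pos hx0 _
      rw [forcing_eq' Cα Cβ a b _ hx0 hCβpos.ne'] at h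
      have hf2 : (Cβ/(s:ℝ)^b) * F2 s ≤ Cβ * CF * (s:ℝ)^(-b-(2*a-2*b)) := by
        have hFb := hCFb s hs
        have hβpos : (0:ℝ) < Cβ/(s:ℝ)^b := div_pos hCβpos hxb
        calc (Cβ/(s:ℝ)^b) * F2 s
            ≤ (Cβ/(s:ℝ)^b) * (CF/(s:ℝ)^(2*a-2*b)) :=
              mul_le_mul_of_nonneg_left hFb hβpos.le
          _ = Cβ * CF * (s:ℝ)^(-b-(2*a-2*b)) := by
              rw [div_mul_div_comm, ← Real.rpow_add hx0, div_rpow_eq' _ _ _ hx0.le]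
              rw [show -(b+(2*a-2*b)) = -b-(2*a-2*b) by ring]
      rw [hc2def]
      linarith [h, hf2]
    obtain ⟨CD, hCD0, hCDb⟩ := master_rec' D Cβ b (2*a-2*b) c2 hD hD1 hCβpos hb hb1
      he heCβ hc2 hrecD
    exact ⟨CF, hCF0, CD, hCD0, fun t ht => ⟨hCFb t ht, hCDb t ht⟩⟩
end

section
/- Suppose a nonnegative sequence Eₜ satisfies E_{t+1} ≤ (1 − 2C_β/t^b + C_β²/t^{2b})·Eₜ + (C_β²σ²/C₂)·t^{−2b−e}, with 0 < b ≤ 1, e ≥ 0, 2C_β > 1 + b + e, and C₂, σ > 0. Then there is a constant C_ℰ > 0 with Eₜ ≤ C_ℰ/t^{b+e} for all t. -/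
lemma bern_aux (p x : ℝ) (hp : 0 ≤ p) (hx : 0 ≤ x) :
    (1 - p * x) * (1 + x) ^ p ≤ 1 := by
  rcases le_or_gt (1 - p * x) 0 with h | h
  · have h0 := Real.rpow_nonneg (by linarith : (0:ℝ) ≤ 1 + x) p
    nlinarith
  · have h1 : (0:ℝ) < 1 + x := by linarith
    have hlog : Real.log (1 + x) ≤ x := by
      have := Real.log_le_sub_one_of_pos h1; linarith
    have h2 : (1 + x) ^ p ≤ Real.exp (p * x) := by
      rw [Real.rpow_def_of_pos h1]
      exact Real.exp_le_exp.2 (by nlinarith)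
    have h3 : 1 - p * x ≤ Real.exp (-(p * x)) := by
      have := Real.add_one_le_exp (-(p * x)); linarith
    calc (1 - p * x) * (1 + x) ^ p
        ≤ Real.exp (-(p * x)) * Real.exp (p * x) :=
          mul_le_mul h3 h2 (Real.rpow_nonneg h1.le p) (Real.exp_nonneg _)
      _ = 1 := by rw [← Real.exp_add]; simp

lemma hnum_aux (CE A Cβ b e P Sv : ℝ) (hP : 0 < P) (hS : 0 < Sv)
    (hhalf : Cβ^2/P ≤ 1/2) (hPS : P ≤ Sv)
    (hCE : 0 < CE) (hA : 0 < A) (h2A : 2*A ≤ CE)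
    (hCb : 2*Cβ > 1+b+e) (hbe : 0 ≤ b+e) :
    (1 - 2*Cβ/P + Cβ^2/P^2)*CE + A/P ≤ CE*(1 - (b+e)/Sv) := by
  have hhalf' : Cβ^2 ≤ P/2 := by rw [div_le_iff₀ hP] at hhalf; linarith
  have h1 : (1 - 2*Cβ/P + Cβ^2/P^2)*CE + A/P
      = (CE*(P^2 - 2*Cβ*P + Cβ^2) + A*P) / P^2 := by
    field_simp
  have h2 : CE*(1 - (b+e)/Sv) = CE*(Sv - (b+e))/Sv := by
    field_simp
  rw [h1, h2, div_le_div_iff₀ (by positivity) hS]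
  have k1 : CE*Cβ^2*Sv ≤ CE*(P/2)*Sv :=
    mul_le_mul_of_nonneg_right (mul_le_mul_of_nonneg_left hhalf' hCE.le) hS.le
  have k2 : A*(P*Sv) ≤ (CE/2)*(P*Sv) :=
    mul_le_mul_of_nonneg_right (by linarith) (by positivity)
  have k3 : CE*(b+e)*(P*P) ≤ CE*(b+e)*(P*Sv) :=
    mul_le_mul_of_nonneg_left (mul_le_mul_of_nonneg_left hPS hP.le)
      (by positivity)
  have k4 : CE*(1+(b+e))*(P*Sv) ≤ CE*(2*Cβ)*(P*Sv) :=
    mul_le_mul_of_nonneg_right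
      (mul_le_mul_of_nonneg_left (by linarith) hCE.le) (by positivity)
  nlinarith [k1, k2, k3, k4]

/-- the recurrence
`E_{t+1} ≤ (1 − 2C_β/tᵇ + C_β²/t^{2b})Eₜ + (C_β²σ²/C₂)t^{−2b−e}` forces
`Eₜ ≤ C_ℰ / t^{b+e}`. -/
theorem smoothing_error_rate (E : ℕ → ℝ) (Cβ C₂ σ b e : ℝ)
    (hE : ∀ t, 0 ≤ E t)
    (hb : 0 < b) (hb1 : b ≤ 1) (he : 0 ≤ e)
    (hCβ : 2 * Cβ > 1 + b + e) (hC₂ : 0 < C₂) (hσ : 0 < σ)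
    (hrec : ∀ t : ℕ, 1 ≤ t →
      E (t + 1) ≤ (1 - 2 * Cβ / (t : ℝ) ^ b + Cβ ^ 2 / (t : ℝ) ^ (2 * b)) * E t
        + (Cβ ^ 2 * σ ^ 2 / C₂) * (t : ℝ) ^ (-(2 * b) - e)) :
    ∃ CE > 0, ∀ t : ℕ, 1 ≤ t → E t ≤ CE / (t : ℝ) ^ (b + e) := by
  have hCβpos : 0 < Cβ := by linarith
  set A : ℝ := Cβ ^ 2 * σ ^ 2 / C₂ with hA_def
  have hA : 0 < A := by positivity
  set T₀ : ℕ := ⌈(2 * Cβ ^ 2) ^ (1 / b)⌉₊ + 1 with hT₀def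
  have hT₀1 : 1 ≤ T₀ := Nat.le_add_left 1 _
  have hT₀key : ∀ s : ℕ, T₀ ≤ s → Cβ ^ 2 / (s : ℝ) ^ b ≤ 1 / 2 := by
    intro s hs
    have h2C : (0:ℝ) ≤ 2 * Cβ ^ 2 := by positivity
    have hs1 : (2 * Cβ ^ 2) ^ (1 / b) ≤ (s : ℝ) := by
      calc (2 * Cβ ^ 2) ^ (1 / b) ≤ (⌈(2 * Cβ ^ 2) ^ (1 / b)⌉₊ : ℝ) := Nat.le_ceil _
        _ ≤ (s : ℝ) := by exact_mod_cast le_trans (Nat.le_succ _) hs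
    have hpow : 2 * Cβ ^ 2 ≤ (s : ℝ) ^ b := by
      have h := Real.rpow_le_rpow (Real.rpow_nonneg h2C _) hs1 hb.le
      rwa [← Real.rpow_mul h2C, one_div, inv_mul_cancel₀ hb.ne', Real.rpow_one] at h
    have hsb : (0:ℝ) < (s : ℝ) ^ b := by
      have : (0:ℝ) < (s:ℝ) := by
        have : 1 ≤ s := le_trans hT₀1 hs
        exact_mod_cast this
      positivity
    rw [div_le_iff₀ hsb]
    nlinarith
  set CE : ℝ := 2 * A + ∑ t ∈ Finset.Icc 1 T₀, E t * (t : ℝ) ^ (b + e) with hCEdef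
  have hsum_nonneg : 0 ≤ ∑ t ∈ Finset.Icc 1 T₀, E t * (t : ℝ) ^ (b + e) :=
    Finset.sum_nonneg fun t _ => mul_nonneg (hE t) (Real.rpow_nonneg (Nat.cast_nonneg t) _)
  have hCEpos : 0 < CE := by positivity
  have hCE2A : 2 * A ≤ CE := by simp only [hCEdef]; linarith
  have hSumCE : ∑ t ∈ Finset.Icc 1 T₀, E t * (t : ℝ) ^ (b + e) ≤ CE := by
    simp only [hCEdef]; linarith
  clear_value A CE T₀
  clear hA_def hCEdef hT₀def
  refine ⟨CE, hCEpos, ?_⟩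
  have hbase : ∀ t : ℕ, 1 ≤ t → t ≤ T₀ → E t ≤ CE / (t : ℝ) ^ (b + e) := by
    intro t ht1 ht2
    have htpos : (0:ℝ) < (t : ℝ) := by exact_mod_cast ht1
    have hQ : (0:ℝ) < (t : ℝ) ^ (b + e) := Real.rpow_pos_of_pos htpos _
    rw [le_div_iff₀ hQ]
    calc E t * (t : ℝ) ^ (b + e)
        ≤ ∑ u ∈ Finset.Icc 1 T₀, E u * (u : ℝ) ^ (b + e) := by
          apply Finset.single_le_sum (f := fun u => E u * (u : ℝ) ^ (b + e))
          · intro u _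
            exact mul_nonneg (hE u) (Real.rpow_nonneg (Nat.cast_nonneg u) _)
          · exact Finset.mem_Icc.2 ⟨ht1, ht2⟩
      _ ≤ CE := hSumCE
  have hind : ∀ t : ℕ, T₀ ≤ t → E t ≤ CE / (t : ℝ) ^ (b + e) := by
    intro t ht
    induction t, ht using Nat.le_induction with
    | base => exact hbase T₀ hT₀1 le_rfl
    | succ s hs IH =>
      have hs1 : 1 ≤ s := le_trans hT₀1 hs
      have hSpos : (0:ℝ) < (s : ℝ) := by exact_mod_cast hs1
      have hS1 : (1:ℝ) ≤ (s : ℝ) := by exact_mod_cast hs1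
      set S : ℝ := (s : ℝ) with hSdef
      clear_value S
      have hP : (0:ℝ) < S ^ b := Real.rpow_pos_of_pos hSpos _
      have hQ : (0:ℝ) < S ^ (b + e) := Real.rpow_pos_of_pos hSpos _
      have h2b : S ^ (2 * b) = (S ^ b) ^ 2 := by
        rw [mul_comm, Real.rpow_mul hSpos.le, Real.rpow_two]
      have hneg : S ^ (-(2 * b) - e) = 1 / (S ^ b * S ^ (b + e)) := by
        rw [show -(2 * b) - e = -(b + (b + e)) by ring, Real.rpow_neg hSpos.le,
          Real.rpow_add hSpos, inv_eq_one_div]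
      have hFnn : 0 ≤ 1 - 2 * Cβ / S ^ b + Cβ ^ 2 / S ^ (2 * b) := by
        have hsq : 1 - 2 * Cβ / S ^ b + Cβ ^ 2 / S ^ (2 * b) = (1 - Cβ / S ^ b) ^ 2 := by
          rw [h2b]; field_simp; ring
        rw [hsq]; positivity
      have hrec' := hrec s hs1
      rw [← hSdef] at hrec'
      have hIH' : (1 - 2 * Cβ / S ^ b + Cβ ^ 2 / S ^ (2 * b)) * E s
          ≤ (1 - 2 * Cβ / S ^ b + Cβ ^ 2 / S ^ (2 * b)) * (CE / S ^ (b + e)) :=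
        mul_le_mul_of_nonneg_left IH hFnn
      have hhalf : Cβ ^ 2 / S ^ b ≤ 1 / 2 := by
        rw [hSdef]; exact hT₀key s hs
      have hPleS : S ^ b ≤ S := by
        nth_rewrite 2 [show S = S ^ (1:ℝ) by rw [Real.rpow_one]]
        exact Real.rpow_le_rpow_of_exponent_le hS1 hb1
      have hnum : (1 - 2 * Cβ / S ^ b + Cβ ^ 2 / S ^ (2 * b)) * CE + A / S ^ b
          ≤ CE * (1 - (b + e) / S) := by
        have h := hnum_aux CE A Cβ b e (S ^ b) S hP hSpos hhalf hPleS hCEpos hA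
          hCE2A hCβ (by linarith)
        rwa [← h2b] at h
      -- Bernoulli step
      have hR : (0:ℝ) < (1 + 1 / S) ^ (b + e) :=
        Real.rpow_pos_of_pos (by positivity) _
      have hsplit : (S + 1) ^ (b + e) = S ^ (b + e) * (1 + 1 / S) ^ (b + e) := by
        rw [show S + 1 = S * (1 + 1 / S) by field_simp,
          Real.mul_rpow hSpos.le (by positivity)]
      have h1 : (1 - (b + e) / S) * (1 + 1 / S) ^ (b + e) ≤ 1 := by
        rw [show (b + e) / S = (b + e) * (1 / S) by ring]
        exact bern_aux (b + e) (1 / S) (by linarith) (by positivity)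
      have hfinal : CE / S ^ (b + e) * (1 - (b + e) / S) ≤ CE / (S + 1) ^ (b + e) := by
        calc CE / S ^ (b + e) * (1 - (b + e) / S)
            ≤ CE / S ^ (b + e) * (1 / (1 + 1 / S) ^ (b + e)) := by
              apply mul_le_mul_of_nonneg_left _ (by positivity)
              rw [le_div_iff₀ hR]; exact h1
          _ = CE / (S ^ (b + e) * (1 + 1 / S) ^ (b + e)) := by
              rw [div_mul_div_comm, mul_one]
          _ = CE / (S + 1) ^ (b + e) := by rw [hsplit]
      have goalcast : ((s + 1 : ℕ) : ℝ) = S + 1 := by rw [hSdef]; push_cast; ring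
      rw [goalcast]
      calc E (s + 1)
          ≤ (1 - 2 * Cβ / S ^ b + Cβ ^ 2 / S ^ (2 * b)) * E s
            + A * S ^ (-(2 * b) - e) := hrec'
        _ ≤ (1 - 2 * Cβ / S ^ b + Cβ ^ 2 / S ^ (2 * b)) * (CE / S ^ (b + e))
            + A * (1 / (S ^ b * S ^ (b + e))) := by
              apply add_le_add hIH'
              rw [hneg]
        _ = ((1 - 2 * Cβ / S ^ b + Cβ ^ 2 / S ^ (2 * b)) * CE + A / S ^ b)
            / S ^ (b + e) := by
              field_simp
        _ ≤ (CE * (1 - (b + e) / S)) / S ^ (b + e) := by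
              gcongr
        _ = CE / S ^ (b + e) * (1 - (b + e) / S) := by ring
        _ ≤ CE / (S + 1) ^ (b + e) := hfinal
  intro t ht
  rcases le_or_gt t T₀ with h | h
  · exact hbase t ht h
  · exact hind t h.le
end
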